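/- arXiv:1709.03794 — 2 statements merged into one kernel-verified Lean document; each statement's English description precedes it below -/
import Mathlib

section
/- Let n, d ≥ 1 be integers, let R be a rank matrix, and let k ∈ (0, n] be a real number. Then for every x ∈ [0, n/k]^d, the empirical beta stable tail dependence function satisfies max(x_1, …, x_d) ≤ ℓ^β_{n,k}(x) ≤ x_1 + ⋯ + x_d. -/
/-- Distribution function of the Beta(r, n-r+1) distribution, i.e. the upper
binomial tail `F_{n,r}(u) = Σ_{s=r}^{n} (n choose s) u^s (1-u)^{n-s}`. -/
noncomputable def Fbeta (n r : ℕ) (u : ℝ) : ℝ :=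
  ∑ s ∈ Finset.Icc r n, (n.choose s : ℝ) * u ^ s * (1 - u) ^ (n - s)

/-- The empirical beta copula built from the rank matrix `R`. -/
noncomputable def empBetaCopula (n d : ℕ) (R : Fin n → Fin d → ℕ)
    (u : Fin d → ℝ) : ℝ :=
  (1 / (n : ℝ)) * ∑ i : Fin n, ∏ j : Fin d, Fbeta n (R i j) (u j)

/-- The empirical beta stable tail dependence function. -/
noncomputable def empBetaStdf (n d : ℕ) (R : Fin n → Fin d → ℕ) (k : ℝ)
    (x : Fin d → ℝ) : ℝ :=
  ((n : ℝ) / k) * (1 - empBetaCopula n d R (fun j => 1 - (k / n) * x j))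

/-! Each column of `R` is a permutation of `1, …, n`, so the margins of the beta copula are
exactly uniform: `∑ᵢ F_{n,R(i,j)}(u) = ∑_r F_{n,r}(u) = n u`, the mean of `Bin(n, u)` written as the
sum of its tail probabilities. Averaging the elementary bounds `1 - ∑ⱼ (1 - aⱼ) ≤ ∏ⱼ aⱼ ≤ aⱼ`
(for `aⱼ ∈ [0, 1]`) over the rows then gives the Fréchet bounds `1 - ∑ⱼ (1 - uⱼ) ≤ C(u) ≤ uⱼ`, and at
`uⱼ = 1 - (k/n) xⱼ` these are the two inequalities. -/

open Finset Polynomial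

theorem Finset.one_sub_sum_one_sub_le_prod {ι R : Type*} [CommRing R] [LinearOrder R]
    [IsStrictOrderedRing R] (s : Finset ι) {g : ι → R}
    (h0 : ∀ i ∈ s, 0 ≤ g i) (h1 : ∀ i ∈ s, g i ≤ 1) :
    1 - ∑ i ∈ s, (1 - g i) ≤ ∏ i ∈ s, g i := by
  induction s using Finset.cons_induction with
  | empty => simp
  | cons a s ha ih =>
    simp only [mem_cons, forall_eq_or_imp] at h0 h1
    rw [sum_cons, prod_cons]
    have := ih h0.2 h1.2
    have := prod_nonneg h0.2
    have := prod_le_one h0.2 h1.2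
    nlinarith [h0.1, h1.1]

theorem Finset.sum_comp_eq_sum_Icc_of_injective {M : Type*} [AddCommMonoid M] {n : ℕ}
    {f : Fin n → ℕ} (hf : Function.Injective f) (hmem : ∀ i, f i ∈ Icc 1 n) (g : ℕ → M) :
    ∑ i, g (f i) = ∑ r ∈ Icc 1 n, g r :=
  sum_nbij f (fun i _ => hmem i) hf.injOn
    (surjOn_of_injOn_of_card_le f (fun i _ => hmem i) hf.injOn (by simp))
    (fun _ _ => rfl)

theorem bernsteinPolynomial_eval_nonneg (n ν : ℕ) {u : ℝ} (hu : u ∈ Set.Icc (0 : ℝ) 1) :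
    0 ≤ (bernsteinPolynomial ℝ n ν).eval u := by
  have := hu.1
  have := sub_nonneg.2 hu.2
  simp only [bernsteinPolynomial, eval_mul, eval_natCast, eval_pow, eval_X, eval_sub, eval_one]
  positivity

theorem Fbeta_eq_sum_bernsteinPolynomial (n r : ℕ) (u : ℝ) :
    Fbeta n r u = ∑ s ∈ Icc r n, (bernsteinPolynomial ℝ n s).eval u := by
  simp [Fbeta, bernsteinPolynomial]

theorem Fbeta_nonneg (n r : ℕ) {u : ℝ} (hu : u ∈ Set.Icc (0 : ℝ) 1) : 0 ≤ Fbeta n r u := by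
  rw [Fbeta_eq_sum_bernsteinPolynomial]
  exact sum_nonneg fun s _ => bernsteinPolynomial_eval_nonneg n s hu

theorem Fbeta_le_one (n r : ℕ) {u : ℝ} (hu : u ∈ Set.Icc (0 : ℝ) 1) : Fbeta n r u ≤ 1 := by
  rw [Fbeta_eq_sum_bernsteinPolynomial]
  calc ∑ s ∈ Icc r n, (bernsteinPolynomial ℝ n s).eval u
      ≤ ∑ s ∈ range (n + 1), (bernsteinPolynomial ℝ n s).eval u :=
        sum_le_sum_of_subset_of_nonneg (fun s hs => by simp at hs ⊢; omega)
          fun s _ _ => bernsteinPolynomial_eval_nonneg n s hu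
    _ = 1 := by rw [← eval_finsetSum, bernsteinPolynomial.sum, eval_one]

theorem sum_Fbeta_Icc_one (n : ℕ) (u : ℝ) : ∑ r ∈ Icc 1 n, Fbeta n r u = n * u := by
  simp_rw [Fbeta_eq_sum_bernsteinPolynomial]
  rw [sum_comm' (t' := range (n + 1)) (s' := fun s => Icc 1 s) (by intro r s; simp; omega)]
  simp only [sum_const, Nat.card_Icc, Nat.add_sub_cancel, ← eval_smul, ← eval_finsetSum,
    bernsteinPolynomial.sum_smul]
  simp

section RankMatrix

variable {n d : ℕ} {R : Fin n → Fin d → ℕ}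

theorem sum_Fbeta_rank (hRrange : ∀ i j, R i j ∈ Icc 1 n)
    (hRperm : ∀ j, Function.Injective fun i => R i j) (j : Fin d) (u : ℝ) :
    ∑ i, Fbeta n (R i j) u = n * u := by
  rw [sum_comp_eq_sum_Icc_of_injective (hRperm j) (hRrange · j) (fun r => Fbeta n r u),
    sum_Fbeta_Icc_one]

theorem empBetaCopula_le (hn : 0 < n) (hRrange : ∀ i j, R i j ∈ Icc 1 n)
    (hRperm : ∀ j, Function.Injective fun i => R i j) {u : Fin d → ℝ}
    (hu : ∀ j, u j ∈ Set.Icc (0 : ℝ) 1) (j : Fin d) :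
    empBetaCopula n d R u ≤ u j := by
  have hrow : ∀ i, ∏ l, Fbeta n (R i l) (u l) ≤ Fbeta n (R i j) (u j) := fun i => by
    rw [← mul_prod_erase _ _ (mem_univ j)]
    exact mul_le_of_le_one_right (Fbeta_nonneg _ _ (hu j))
      (prod_le_one (fun l _ => Fbeta_nonneg _ _ (hu l)) fun l _ => Fbeta_le_one _ _ (hu l))
  calc empBetaCopula n d R u ≤ (1 / n : ℝ) * ∑ i, Fbeta n (R i j) (u j) := by
        unfold empBetaCopula; gcongr with i; exact hrow i
    _ = u j := by rw [sum_Fbeta_rank hRrange hRperm]; field_simp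

theorem one_sub_sum_le_empBetaCopula (hn : 0 < n) (hRrange : ∀ i j, R i j ∈ Icc 1 n)
    (hRperm : ∀ j, Function.Injective fun i => R i j) {u : Fin d → ℝ}
    (hu : ∀ j, u j ∈ Set.Icc (0 : ℝ) 1) :
    1 - ∑ j, (1 - u j) ≤ empBetaCopula n d R u := by
  have hrow : ∀ i, 1 - ∑ j, (1 - Fbeta n (R i j) (u j)) ≤ ∏ j, Fbeta n (R i j) (u j) :=
    fun i => one_sub_sum_one_sub_le_prod _ (fun j _ => Fbeta_nonneg _ _ (hu j))
      fun j _ => Fbeta_le_one _ _ (hu j)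
  have hcols : ∑ i, (1 - ∑ j, (1 - Fbeta n (R i j) (u j))) = n * (1 - ∑ j, (1 - u j)) := by
    simp only [sum_sub_distrib, sum_const, card_univ, Fintype.card_fin, nsmul_eq_mul, mul_one]
    rw [sum_comm]
    simp only [sum_Fbeta_rank hRrange hRperm, ← mul_sum]
    ring
  calc 1 - ∑ j, (1 - u j) = (1 / n : ℝ) * ∑ i, (1 - ∑ j, (1 - Fbeta n (R i j) (u j))) := by
        rw [hcols]; field_simp
    _ ≤ empBetaCopula n d R u := by unfold empBetaCopula; gcongr with i; exact hrow i

end RankMatrix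

theorem stmt0_general (n d : ℕ)
    (R : Fin n → Fin d → ℕ)
    (hRrange : ∀ i j, R i j ∈ Finset.Icc 1 n)
    (hRperm : ∀ j : Fin d, Function.Injective fun i : Fin n => R i j)
    (k : ℝ) (hk0 : 0 < k) (hkn : k ≤ n)
    (x : Fin d → ℝ) (hx : ∀ j, x j ∈ Set.Icc (0 : ℝ) ((n : ℝ) / k)) :
    (∀ j, x j ≤ empBetaStdf n d R k x) ∧
      empBetaStdf n d R k x ≤ ∑ j : Fin d, x j := by
  have hn : 0 < n := by exact_mod_cast hk0.trans_le hkn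
  set u : Fin d → ℝ := fun j => 1 - (k / n) * x j
  have hx_eq : ∀ j, x j = (n / k) * (1 - u j) := fun j => by simp only [u]; field_simp; ring
  have hu : ∀ j, u j ∈ Set.Icc (0 : ℝ) 1 := fun j => by
    have h0 : 0 ≤ (k / n) * x j := mul_nonneg (by positivity) (hx j).1
    have h1 : (k / n) * x j ≤ 1 :=
      calc (k / n) * x j ≤ (k / n) * (n / k) := by gcongr; exact (hx j).2
        _ = 1 := by field_simp
    constructor <;> simp only [u] <;> linarith
  have hnk : (0 : ℝ) ≤ n / k := by positivity
  refine ⟨fun j => ?_, ?_⟩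
  · rw [hx_eq j]
    exact mul_le_mul_of_nonneg_left (by linarith [empBetaCopula_le hn hRrange hRperm hu j]) hnk
  · simp_rw [hx_eq, ← mul_sum]
    exact mul_le_mul_of_nonneg_left
      (by linarith [one_sub_sum_le_empBetaCopula hn hRrange hRperm hu]) hnk

theorem stmt0 (n d : ℕ) (hn : 1 ≤ n) (hd : 1 ≤ d)
    (R : Fin n → Fin d → ℕ)
    (hRrange : ∀ i j, R i j ∈ Finset.Icc 1 n)
    (hRperm : ∀ j : Fin d, Function.Injective fun i : Fin n => R i j)
    (k : ℝ) (hk0 : 0 < k) (hkn : k ≤ n)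
    (x : Fin d → ℝ) (hx : ∀ j, x j ∈ Set.Icc (0 : ℝ) ((n : ℝ) / k)) :
    (∀ j, x j ≤ empBetaStdf n d R k x) ∧
      empBetaStdf n d R k x ≤ ∑ j : Fin d, x j :=
  stmt0_general n d R hRrange hRperm k hk0 hkn x hx
end

section
/- Let n, d ≥ 1 be integers, let R be a rank matrix, and let k ∈ (0, n] be a real number. Then for every x ∈ [0, n/k]^d, the empirical beta stable tail dependence function is the binomial mixture of the empirical stable tail dependence function: ℓ^β_{n,k}(x) = Σ_{t ∈ {0,…,n}^d} [Π_{j=1}^d b(n, (k/n)x_j, t_j)] · ℓ_{n,k}(t/k), where t/k = (t_1/k, …, t_d/k). Equivalently, C_n^β(1 − (k/n)x) = Σ_{t ∈ {0,…,n}^d} [Π_{j=1}^d b(n, (k/n)x_j, t_j)] · C_n(1 − t/n). -/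
/-- The empirical copula built from the rank matrix `R`. -/
noncomputable def empCopula (n d : ℕ) (R : Fin n → Fin d → ℕ)
    (u : Fin d → ℝ) : ℝ :=
  (1 / (n : ℝ)) *
    ∑ i : Fin n, ∏ j : Fin d, (if (R i j : ℝ) / n ≤ u j then (1 : ℝ) else 0)

/-- The empirical stable tail dependence function. -/
noncomputable def empStdf (n d : ℕ) (R : Fin n → Fin d → ℕ) (k : ℝ)
    (x : Fin d → ℝ) : ℝ :=
  ((n : ℝ) / k) * (1 - empCopula n d R (fun j => 1 - (k / n) * x j))

/-- The binomial probability mass function `b(n, p, t)`. -/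
noncomputable def binomPMF (n : ℕ) (p : ℝ) (t : ℕ) : ℝ :=
  (n.choose t : ℝ) * p ^ t * (1 - p) ^ (n - t)

lemma sum_binomPMF (n : ℕ) (p : ℝ) :
    ∑ t ∈ Finset.range (n + 1), binomPMF n p t = 1 := by
  have h := add_pow p (1 - p) n
  simp only [add_sub_cancel, one_pow] at h
  rw [h]
  apply Finset.sum_congr rfl
  intro t _
  simp only [binomPMF]; ring

lemma FbetaDecomp (n : ℕ) (hn : 1 ≤ n) (r : ℕ) (hr1 : 1 ≤ r) (hrn : r ≤ n) (p : ℝ) :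
    Fbeta n r (1 - p) = ∑ t ∈ Finset.range (n + 1),
      binomPMF n p t * (if (r : ℝ) / n ≤ 1 - (t : ℝ) / n then 1 else 0) := by
  have hn0 : (0 : ℝ) < n := by exact_mod_cast hn
  have hiff : ∀ t ∈ Finset.range (n + 1),
      binomPMF n p t * (if (r : ℝ) / n ≤ 1 - (t : ℝ) / n then 1 else 0)
        = if t ≤ n - r then binomPMF n p t else 0 := by
    intro t ht
    simp only [Finset.mem_range, Nat.lt_succ_iff] at ht
    have key : ((r : ℝ) / n ≤ 1 - (t : ℝ) / n) ↔ t ≤ n - r := by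
      rw [div_le_iff₀ hn0, sub_mul, one_mul, div_mul_cancel₀ _ (ne_of_gt hn0),
        le_sub_iff_add_le, show ((r : ℝ) + t) = ((r + t : ℕ) : ℝ) by push_cast; ring,
        show (n : ℝ) = ((n : ℕ) : ℝ) from rfl, Nat.cast_le]
      omega
    simp only [key]
    split <;> simp
  rw [Finset.sum_congr rfl hiff, ← Finset.sum_filter]
  have hfilt : (Finset.range (n + 1)).filter (· ≤ n - r) = Finset.range (n - r + 1) := by
    ext t; simp only [Finset.mem_filter, Finset.mem_range]; omega
  rw [hfilt]
  unfold Fbeta binomPMF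
  refine Finset.sum_nbij' (fun s => n - s) (fun t => n - t) ?_ ?_ ?_ ?_ ?_
  · intro s hs; simp only [Finset.mem_Icc] at hs; simp only [Finset.mem_range]; omega
  · intro t ht; simp only [Finset.mem_range] at ht; simp only [Finset.mem_Icc]; omega
  · intro s hs; simp only [Finset.mem_Icc] at hs; omega
  · intro t ht; simp only [Finset.mem_range] at ht; omega
  · intro s hs
    simp only [Finset.mem_Icc] at hs
    rw [Nat.choose_symm hs.2, Nat.sub_sub_self hs.2]
    ring

theorem stmt5 (n d : ℕ) (hn : 1 ≤ n) (hd : 1 ≤ d)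
    (R : Fin n → Fin d → ℕ)
    (hRrange : ∀ i j, R i j ∈ Finset.Icc 1 n)
    (hRperm : ∀ j : Fin d, Function.Injective fun i : Fin n => R i j)
    (k : ℝ) (hk0 : 0 < k) (hkn : k ≤ n)
    (x : Fin d → ℝ) (hx : ∀ j, x j ∈ Set.Icc (0 : ℝ) ((n : ℝ) / k)) :
    empBetaStdf n d R k x =
      ∑ t ∈ Fintype.piFinset (fun _ : Fin d => Finset.range (n + 1)),
        (∏ j : Fin d, binomPMF n ((k / n) * x j) (t j)) *
          empStdf n d R k (fun j => (t j : ℝ) / k) ∧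
    empBetaCopula n d R (fun j => 1 - (k / n) * x j) =
      ∑ t ∈ Fintype.piFinset (fun _ : Fin d => Finset.range (n + 1)),
        (∏ j : Fin d, binomPMF n ((k / n) * x j) (t j)) *
          empCopula n d R (fun j => 1 - (t j : ℝ) / n) := by
  have hn0 : (n : ℝ) ≠ 0 := by
    have : (0 : ℝ) < n := by exact_mod_cast hn
    exact ne_of_gt this
  have hk0' : k ≠ 0 := ne_of_gt hk0
  -- second claim
  have h2 : empBetaCopula n d R (fun j => 1 - (k / n) * x j) =
      ∑ t ∈ Fintype.piFinset (fun _ : Fin d => Finset.range (n + 1)),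
        (∏ j : Fin d, binomPMF n ((k / n) * x j) (t j)) *
          empCopula n d R (fun j => 1 - (t j : ℝ) / n) := by
    unfold empBetaCopula empCopula
    have hstep : ∀ i : Fin n,
        (∏ j : Fin d, Fbeta n (R i j) (1 - (k / n) * x j)) =
        ∑ t ∈ Fintype.piFinset (fun _ : Fin d => Finset.range (n + 1)),
          ∏ j : Fin d, (binomPMF n ((k / n) * x j) (t j) *
            (if (R i j : ℝ) / n ≤ 1 - (t j : ℝ) / n then 1 else 0)) := by
      intro i
      rw [Finset.sum_prod_piFinset (Finset.range (n + 1))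
        (fun j s => binomPMF n ((k / n) * x j) s *
          (if (R i j : ℝ) / n ≤ 1 - (s : ℝ) / n then 1 else 0))]
      apply Finset.prod_congr rfl
      intro j _
      have hr := hRrange i j
      simp only [Finset.mem_Icc] at hr
      exact FbetaDecomp n hn (R i j) hr.1 hr.2 ((k / n) * x j)
    simp only [hstep]
    rw [Finset.sum_comm, Finset.mul_sum]
    apply Finset.sum_congr rfl
    intro t _
    simp only [Finset.prod_mul_distrib, ← Finset.mul_sum]
    ring
  refine ⟨?_, h2⟩
  -- first claim
  have hsum1 : ∑ t ∈ Fintype.piFinset (fun _ : Fin d => Finset.range (n + 1)),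
      ∏ j : Fin d, binomPMF n ((k / n) * x j) (t j) = 1 := by
    rw [Finset.sum_prod_piFinset (Finset.range (n + 1))
      (fun j s => binomPMF n ((k / n) * x j) s)]
    simp [sum_binomPMF]
  have hsimp : ∀ (t : Fin d → ℕ) (j : Fin d),
      1 - k / (n : ℝ) * ((t j : ℝ) / k) = 1 - (t j : ℝ) / n := by
    intro t j
    congr 1
    field_simp
  unfold empBetaStdf empStdf
  rw [h2]
  simp only [hsimp]
  rw [eq_comm]
  calc ∑ t ∈ Fintype.piFinset (fun _ : Fin d => Finset.range (n + 1)),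
        (∏ j : Fin d, binomPMF n ((k / n) * x j) (t j)) *
          (((n : ℝ) / k) * (1 - empCopula n d R (fun j => 1 - (t j : ℝ) / n)))
      = ((n : ℝ) / k) * ∑ t ∈ Fintype.piFinset (fun _ : Fin d => Finset.range (n + 1)),
          ((∏ j : Fin d, binomPMF n ((k / n) * x j) (t j)) -
           (∏ j : Fin d, binomPMF n ((k / n) * x j) (t j)) *
             empCopula n d R (fun j => 1 - (t j : ℝ) / n)) := by
        rw [Finset.mul_sum]
        apply Finset.sum_congr rfl
        intro t _
        ring
    _ = ((n : ℝ) / k) *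
          (1 - ∑ t ∈ Fintype.piFinset (fun _ : Fin d => Finset.range (n + 1)),
            (∏ j : Fin d, binomPMF n ((k / n) * x j) (t j)) *
              empCopula n d R (fun j => 1 - (t j : ℝ) / n)) := by
        rw [Finset.sum_sub_distrib, hsum1]
end
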